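/- arXiv:2604.05528 — 6 statements merged into one kernel-verified Lean document; each statement's English description precedes it below -/
import Mathlib

section
/- Let T be a transitive tournament with topological order u₁,...,uₙ, let 𝒲 = (W₁,...,Wₘ) be a tuple of vertex subsets, and let uᵢ have characteristic vector 𝐮ᵢ ∈ {0,1}^m (with j-th entry 1 iff uᵢ ∈ Wⱼ). Then T ⊕ 𝒲 is a transitive tournament if and only if there is no triple of indices a < b < c such that 𝐮ₐ·𝐮_b = 𝐮_b·𝐮_c (mod 2) and 𝐮ₐ·𝐮_b ≠ 𝐮ₐ·𝐮_c (mod 2), where · denotes the inner product over GF(2) (i.e., the parity of the number of coordinates where both vectors equal 1). -/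
attribute [local instance] Classical.propDecidable

/-- Inversion of a digraph `D` with respect to a vertex subset `Y`:
reverse every arc whose both endpoints lie in `Y`. -/
def flip1 {V : Type*} (D : V → V → Prop) (Y : Set V) : V → V → Prop :=
  fun u v => ((u ∈ Y ∧ v ∈ Y) ∧ D v u) ∨ (¬ (u ∈ Y ∧ v ∈ Y) ∧ D u v)

/-- Successive inversions with respect to a tuple (list) of subsets. -/
def invL {V : Type*} (D : V → V → Prop) (Ys : List (Set V)) : V → V → Prop :=
  Ys.foldl flip1 D

/-- A digraph is acyclic if it has no nontrivial closed directed walk. -/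
def Acyclic {V : Type*} (D : V → V → Prop) : Prop :=
  ∀ v, ¬ Relation.TransGen D v v

/-- Inversion with respect to a `k`-tuple of subsets. -/
def invF {V : Type*} {k : ℕ} (D : V → V → Prop) (Y : Fin k → Set V) : V → V → Prop :=
  invL D (List.ofFn Y)

/-- The number of sets of the tuple `Ws` containing both `a` and `b`; its parity
is the GF(2) inner product of the characteristic vectors of `a` and `b`. -/
noncomputable def dotP {V : Type*} (Ws : List (Set V)) (a b : V) : ℕ :=
  Ws.countP (fun W => decide (a ∈ W ∧ b ∈ W))

lemma dotP_cons {V : Type*} (W : Set V) (Ws : List (Set V)) (a b : V) :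
    dotP (W::Ws) a b = dotP Ws a b + (if a ∈ W ∧ b ∈ W then 1 else 0) := by
  simp [dotP, List.countP_cons]

lemma dotP_symm {V : Type*} (Ws : List (Set V)) (a b : V) :
    dotP Ws a b = dotP Ws b a := by
  unfold dotP
  apply List.countP_congr
  intro W _
  simp [and_comm]

lemma invL_eval {V : Type*} (Ws : List (Set V)) : ∀ (D : V → V → Prop) (a b : V),
    invL D Ws a b ↔ (dotP Ws a b % 2 = 0 ∧ D a b) ∨ (dotP Ws a b % 2 = 1 ∧ D b a) := by
  induction Ws with
  | nil => intro D a b; simp [invL, dotP]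
  | cons W Ws ih =>
    intro D a b
    have h1 := dotP_cons W Ws a b
    have hs := dotP_symm Ws a b
    show invL (flip1 D W) Ws a b ↔ _
    rw [ih]
    by_cases hm : a ∈ W ∧ b ∈ W
    · have hm' : b ∈ W ∧ a ∈ W := ⟨hm.2, hm.1⟩
      have h1' : dotP (W::Ws) a b = dotP Ws a b + 1 := by rw [h1, if_pos hm]
      rcases Nat.mod_two_eq_zero_or_one (dotP Ws a b) with h | h
      · have h2 : (dotP Ws a b + 1) % 2 = 1 := by omega
        simp [flip1, hm, hm', h1', h, h2]
      · have h2 : (dotP Ws a b + 1) % 2 = 0 := by omega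
        simp [flip1, hm, hm', h1', h, h2]
    · have hm' : ¬ (b ∈ W ∧ a ∈ W) := fun h => hm ⟨h.2, h.1⟩
      have h1' : dotP (W::Ws) a b = dotP Ws a b := by rw [h1, if_neg hm, Nat.add_zero]
      rcases Nat.mod_two_eq_zero_or_one (dotP Ws a b) with h | h <;>
        simp [flip1, hm, hm', h1', h]

/-- for the transitive tournament on `Fin n` (topological order
`0 < 1 < ⋯`), `T ⊕ 𝒲` is transitive iff there is no bad triple `a < b < c`. -/
theorem stmt3 (n : ℕ) (Ws : List (Set (Fin n))) :
    (∀ a b c : Fin n,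
        invL (fun i j : Fin n => i < j) Ws a b →
        invL (fun i j : Fin n => i < j) Ws b c →
        invL (fun i j : Fin n => i < j) Ws a c)
      ↔ ¬ ∃ a b c : Fin n, a < b ∧ b < c ∧
          dotP Ws a b % 2 = dotP Ws b c % 2 ∧ dotP Ws a b % 2 ≠ dotP Ws a c % 2 := by
  constructor
  · intro h
    rintro ⟨a, b, c, hab, hbc, e1, e2⟩
    have sab := dotP_symm Ws a b
    have sbc := dotP_symm Ws b c
    have sac := dotP_symm Ws a c
    have hac : a < c := lt_trans hab hbc
    rcases Nat.mod_two_eq_zero_or_one (dotP Ws a b) with hp | hp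
    · have hRab : invL (fun i j : Fin n => i < j) Ws a b :=
        (invL_eval Ws _ a b).mpr (Or.inl ⟨hp, hab⟩)
      have hRbc : invL (fun i j : Fin n => i < j) Ws b c :=
        (invL_eval Ws _ b c).mpr (Or.inl ⟨by omega, hbc⟩)
      rcases (invL_eval Ws _ a c).mp (h a b c hRab hRbc) with ⟨h0, _⟩ | ⟨_, hlt⟩
      · omega
      · exact absurd hlt (not_lt.mpr hac.le)
    · have hRcb : invL (fun i j : Fin n => i < j) Ws c b :=
        (invL_eval Ws _ c b).mpr (Or.inr ⟨by omega, hbc⟩)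
      have hRba : invL (fun i j : Fin n => i < j) Ws b a :=
        (invL_eval Ws _ b a).mpr (Or.inr ⟨by omega, hab⟩)
      rcases (invL_eval Ws _ c a).mp (h c b a hRcb hRba) with ⟨_, hlt⟩ | ⟨h1, _⟩
      · exact absurd hlt (not_lt.mpr hac.le)
      · have sca := dotP_symm Ws c a
        omega
  · intro h a b c hAB hBC
    push_neg at h
    rw [invL_eval] at hAB hBC ⊢
    have sab := dotP_symm Ws a b
    have sbc := dotP_symm Ws b c
    have sac := dotP_symm Ws a c
    rcases hAB with ⟨hp1, hab⟩ | ⟨hp1, hba⟩ <;> rcases hBC with ⟨hp2, hbc⟩ | ⟨hp2, hcb⟩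
    · have := h a b c hab hbc (by omega)
      exact Or.inl ⟨by omega, lt_trans hab hbc⟩
    · rcases lt_trichotomy a c with h1 | h1 | h1
      · rcases Nat.mod_two_eq_zero_or_one (dotP Ws a c) with q | q
        · exact Or.inl ⟨q, h1⟩
        · exfalso; have := h a c b h1 hcb (by omega); omega
      · exfalso; subst h1; omega
      · rcases Nat.mod_two_eq_zero_or_one (dotP Ws a c) with q | q
        · exfalso; have := h c a b h1 hab (by omega); omega
        · exact Or.inr ⟨q, h1⟩
    · rcases lt_trichotomy a c with h1 | h1 | h1
      · rcases Nat.mod_two_eq_zero_or_one (dotP Ws a c) with q | q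
        · exact Or.inl ⟨q, h1⟩
        · exfalso; have := h b a c hba h1 (by omega); omega
      · exfalso; subst h1; omega
      · rcases Nat.mod_two_eq_zero_or_one (dotP Ws a c) with q | q
        · exfalso; have := h b c a hbc h1 (by omega); omega
        · exact Or.inr ⟨q, h1⟩
    · have := h c b a hcb hba (by omega)
      exact Or.inr ⟨by omega, lt_trans hcb hba⟩
end

section
/- Let D be a directed graph whose vertex set is partitioned into parts V₁,...,Vₘ pairwise intersecting in exactly one common cut vertex c (i.e., Vᵢ ∩ Vⱼ = {c} for i ≠ j), with no arcs between Vᵢ \ {c} and Vⱼ \ {c} for i ≠ j. Suppose for each i there is a decycling family 𝒴ᵢ = (Y_{i,1},...,Y_{i,k}) for D[Vᵢ] such that c belongs to Y_{i,ℓ} for exactly the indices ℓ ∈ {1,...,w} (the same set of indices for every i). Then 𝒴 = (Y₁,...,Yₖ) with Yℓ = ⋃ᵢ Y_{i,ℓ} is a decycling family of D, and the weight of c with respect to 𝒴 is w. -/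
attribute [local instance] Classical.propDecidable

lemma invL_iff {V : Type*} (Ys : List (Set V)) (D : V → V → Prop) (u v : V) :
    invL D Ys u v ↔
      (Even (Ys.countP (fun Y => decide (u ∈ Y ∧ v ∈ Y))) ∧ D u v) ∨
      (¬ Even (Ys.countP (fun Y => decide (u ∈ Y ∧ v ∈ Y))) ∧ D v u) := by
  induction Ys generalizing D with
  | nil => simp [invL]
  | cons Z Ys ih =>
    have h1 : invL D (Z :: Ys) u v = invL (flip1 D Z) Ys u v := rfl
    rw [h1, ih, List.countP_cons]
    by_cases h : u ∈ Z ∧ v ∈ Z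
    · simp only [h, decide_eq_true_eq, if_pos, flip1, not_true, false_and, or_false,
        true_and, decide_true, if_true, Nat.even_add_one]
      tauto
    · simp only [flip1, h, decide_eq_false h, if_neg, false_and, not_false_iff, true_and,
        false_or, if_false, Nat.add_zero]
      tauto

lemma countP_ofFn_congr {α β : Type*} : ∀ {n : ℕ} (f : Fin n → α) (g : Fin n → β)
    (p : α → Bool) (q : β → Bool), (∀ ℓ, p (f ℓ) = q (g ℓ)) →
    (List.ofFn f).countP p = (List.ofFn g).countP q := by
  intro n
  induction n with
  | zero => intro f g p q h; simp
  | succ n ih =>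
    intro f g p q h
    rw [List.ofFn_succ, List.ofFn_succ, List.countP_cons, List.countP_cons,
      ih (fun i => f i.succ) (fun i => g i.succ) p q (fun i => h i.succ), h 0]

lemma card_filter_fin_lt {k w : ℕ} (hw : w ≤ k) :
    (Finset.univ.filter (fun ℓ : Fin k => (ℓ : ℕ) < w)).card = w := by
  have himg : (Finset.univ.filter (fun ℓ : Fin k => (ℓ : ℕ) < w)).image Fin.val
      = Finset.range w := by
    ext x
    simp only [Finset.mem_image, Finset.mem_filter, Finset.mem_univ, true_and, Finset.mem_range]
    constructor
    · rintro ⟨ℓ, hl, rfl⟩; exact hl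
    · intro hx; exact ⟨⟨x, lt_of_lt_of_le hx hw⟩, hx, rfl⟩
  have hinj : Set.InjOn Fin.val
      ((Finset.univ.filter (fun ℓ : Fin k => (ℓ : ℕ) < w)) : Set (Fin k)) :=
    fun a _ b _ h => Fin.ext h
  rw [← Finset.card_image_of_injOn hinj, himg, Finset.card_range]

/-- gluing decycling families of the parts `Vᵢ` of a digraph whose
parts pairwise meet exactly in a common cut vertex `c`, with matching membership
pattern of `c` (the first `w` sets), yields a decycling family of the whole
digraph in which `c` has weight `w`. -/
theorem stmt7 {V : Type*} {ι : Type*} [Nonempty ι] (D : V → V → Prop)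
    (Vp : ι → Set V) (c : V) (k w : ℕ) (hw : w ≤ k)
    (hcover : ∀ x : V, ∃ i, x ∈ Vp i)
    (hint : ∀ i j, i ≠ j → Vp i ∩ Vp j = {c})
    (harcs : ∀ i j, i ≠ j → ∀ u ∈ Vp i, ∀ v ∈ Vp j, u ≠ c → v ≠ c → ¬ D u v)
    (Y : ι → Fin k → Set V)
    (hsub : ∀ i ℓ, Y i ℓ ⊆ Vp i)
    (hcY : ∀ i (ℓ : Fin k), c ∈ Y i ℓ ↔ (ℓ : ℕ) < w)
    (hdec : ∀ i, Acyclic (invF (fun u v => u ∈ Vp i ∧ v ∈ Vp i ∧ D u v) (Y i))) :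
    Acyclic (invF D (fun ℓ => ⋃ i, Y i ℓ)) ∧
      (Finset.univ.filter (fun ℓ : Fin k => c ∈ ⋃ i, Y i ℓ)).card = w := by
  classical
  set E : V → V → Prop := invF D (fun ℓ => ⋃ i, Y i ℓ) with hEdef
  set Di : ι → V → V → Prop := fun i u v => u ∈ Vp i ∧ v ∈ Vp i ∧ D u v with hDidef
  set Ei : ι → V → V → Prop := fun i => invF (Di i) (Y i) with hEidef
  -- c belongs to every part
  have hcVp : ∀ i, c ∈ Vp i := by
    intro i
    obtain ⟨j, hj⟩ := hcover c
    by_cases h : i = j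
    · exact h ▸ hj
    · have hm : c ∈ Vp i ∩ Vp j := by rw [hint i j h]; rfl
      exact hm.1
  -- parts intersect only at c
  have huniq : ∀ x (i j : ι), x ≠ c → x ∈ Vp i → x ∈ Vp j → i = j := by
    intro x i j hx hi hj
    by_contra h
    have hm : x ∈ Vp i ∩ Vp j := ⟨hi, hj⟩
    rw [hint i j h] at hm
    exact hx hm
  -- membership in the union, for a vertex known to be in part i
  have hmemU : ∀ (x : V) (i : ι) (ℓ : Fin k), x ∈ Vp i →
      ((x ∈ ⋃ i', Y i' ℓ) ↔ x ∈ Y i ℓ) := by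
    intro x i ℓ hx
    constructor
    · intro hxU
      obtain ⟨i', hx'⟩ := Set.mem_iUnion.mp hxU
      by_cases hxc : x = c
      · subst hxc
        exact (hcY i ℓ).mpr ((hcY i' ℓ).mp hx')
      · have : i' = i := huniq x i' i hxc (hsub i' ℓ hx') hx
        exact this ▸ hx'
    · intro hx'
      exact Set.mem_iUnion.mpr ⟨i, hx'⟩
  -- any arc of E lies in some Ei
  have hstep : ∀ u v, E u v → ∃ i, Ei i u v := by
    intro u v hE
    rw [hEdef, invF, invL_iff] at hE
    -- the underlying digraph has an arc between u and v (in some direction)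
    have hD : D u v ∨ D v u := by
      rcases hE with ⟨_, h⟩ | ⟨_, h⟩
      exacts [Or.inl h, Or.inr h]
    -- find a part containing both u and v
    have hpart : ∃ i, u ∈ Vp i ∧ v ∈ Vp i := by
      by_cases huc : u = c
      · obtain ⟨j, hj⟩ := hcover v
        exact ⟨j, huc ▸ hcVp j, hj⟩
      by_cases hvc : v = c
      · obtain ⟨i, hi⟩ := hcover u
        exact ⟨i, hi, hvc ▸ hcVp i⟩
      obtain ⟨i, hi⟩ := hcover u
      obtain ⟨j, hj⟩ := hcover v
      by_cases hij : i = j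
      · exact ⟨i, hi, hij ▸ hj⟩
      · exfalso
        rcases hD with h | h
        · exact harcs i j hij u hi v hj huc hvc h
        · exact harcs j i (Ne.symm hij) v hj u hi hvc huc h
    obtain ⟨i, hui, hvi⟩ := hpart
    refine ⟨i, ?_⟩
    rw [hEidef]
    show invF (Di i) (Y i) u v
    rw [invF, invL_iff]
    have hcount : ((List.ofFn (fun ℓ => ⋃ i', Y i' ℓ)).countP
          (fun Z => decide (u ∈ Z ∧ v ∈ Z)))
        = ((List.ofFn (Y i)).countP (fun Z => decide (u ∈ Z ∧ v ∈ Z))) := by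
      apply countP_ofFn_congr
      intro ℓ
      apply decide_eq_decide.mpr
      rw [hmemU u i ℓ hui, hmemU v i ℓ hvi]
    rw [hcount] at hE
    rcases hE with ⟨he, h⟩ | ⟨he, h⟩
    · exact Or.inl ⟨he, hui, hvi, h⟩
    · exact Or.inr ⟨he, hvi, hui, h⟩
  -- endpoints of Ei arcs lie in Vp i
  have hEi_mem : ∀ (i : ι) u v, Ei i u v → u ∈ Vp i ∧ v ∈ Vp i := by
    intro i u v h
    rw [hEidef] at h
    replace h : invF (Di i) (Y i) u v := h
    rw [invF, invL_iff] at h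
    rcases h with ⟨_, h⟩ | ⟨_, h⟩
    exacts [⟨h.1, h.2.1⟩, ⟨h.2.1, h.1⟩]
  have hTmem : ∀ (i : ι) u v, Relation.TransGen (Ei i) u v → u ∈ Vp i ∧ v ∈ Vp i := by
    intro i u v h
    induction h with
    | single h => exact hEi_mem i _ _ h
    | tail _ h ih => exact ⟨ih.1, (hEi_mem i _ _ h).2⟩
  have hdec' : ∀ i, Acyclic (Ei i) := hdec
  -- decomposition of paths in E
  have key : ∀ u v, Relation.TransGen E u v →
      ∃ i, Relation.TransGen (Ei i) u v ∨
        (Relation.TransGen (Ei i) u c ∧ ∃ j, Relation.TransGen (Ei j) c v) := by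
    intro u v h
    induction h with
    | single h =>
      obtain ⟨i, h⟩ := hstep _ _ h
      exact ⟨i, Or.inl (Relation.TransGen.single h)⟩
    | @tail b v hub hbv ih =>
      obtain ⟨j', hbv⟩ := hstep _ _ hbv
      obtain ⟨i, hi | ⟨hic, j, hjc⟩⟩ := ih
      · by_cases hij : i = j'
        · subst hij
          exact ⟨i, Or.inl (hi.tail hbv)⟩
        · have hb : b = c := by
            by_contra hb
            exact hij (huniq b i j' hb (hTmem i _ _ hi).2 (hEi_mem j' _ _ hbv).1)
          subst hb
          exact ⟨i, Or.inr ⟨hi, j', Relation.TransGen.single hbv⟩⟩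
      · by_cases hjj : j = j'
        · subst hjj
          exact ⟨i, Or.inr ⟨hic, j, hjc.tail hbv⟩⟩
        · have hb : b = c := by
            by_contra hb
            exact hjj (huniq b j j' hb (hTmem j _ _ hjc).2 (hEi_mem j' _ _ hbv).1)
          subst hb
          exact absurd hjc (hdec' j b)
  constructor
  · intro v hv
    obtain ⟨i, h | ⟨hic, j, hjc⟩⟩ := key v v hv
    · exact hdec' i v h
    · by_cases hij : i = j
      · subst hij
        exact hdec' i c (hjc.trans hic)
      · have hvc : v = c := by
          by_contra hvc
          exact hij (huniq v i j hvc (hTmem i _ _ hic).1 (hTmem j _ _ hjc).2)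
        subst hvc
        exact hdec' i v hic
  · have hiff : ∀ ℓ : Fin k, (c ∈ ⋃ i, Y i ℓ) ↔ (ℓ : ℕ) < w := by
      intro ℓ
      constructor
      · intro h
        obtain ⟨i, hi⟩ := Set.mem_iUnion.mp h
        exact (hcY i ℓ).mp hi
      · intro h
        exact Set.mem_iUnion.mpr ⟨Classical.arbitrary ι, (hcY _ ℓ).mpr h⟩
    have hfe : Finset.univ.filter (fun ℓ : Fin k => c ∈ ⋃ i, Y i ℓ)
        = Finset.univ.filter (fun ℓ : Fin k => (ℓ : ℕ) < w) := by
      ext ℓ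
      simp only [Finset.mem_filter, Finset.mem_univ, true_and, hiff ℓ]
    rw [hfe]
    exact card_filter_fin_lt hw
end

section
/- With the setup of the previous separator lemma (V_t = V₁ ∪ V₂, X = V₁ ∩ V₂ separating, D₁ and D₂ acyclic, Q⁺ the transitive closure of Q₁ ∪ Q₂), the digraph D is acyclic if and only if the relation Q⁺ on X is irreflexive (i.e., (u,u) ∉ Q⁺ for all u ∈ X). -/
attribute [local instance] Classical.propDecidable

/-- with the separator setup (every arc inside `V₁` or `V₂`,
both induced parts acyclic), `D` is acyclic iff the transitive closure of
`Q₁ ∪ Q₂` on `X = V₁ ∩ V₂` is irreflexive. -/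
theorem stmt12 {V : Type*} (D : V → V → Prop) (V₁ V₂ : Set V)
    (harcs : ∀ u v : V, D u v → (u ∈ V₁ ∧ v ∈ V₁) ∨ (u ∈ V₂ ∧ v ∈ V₂))
    (hac1 : Acyclic (fun u v => u ∈ V₁ ∧ v ∈ V₁ ∧ D u v))
    (hac2 : Acyclic (fun u v => u ∈ V₂ ∧ v ∈ V₂ ∧ D u v)) :
    Acyclic D ↔
      ∀ u ∈ V₁ ∩ V₂, ¬ Relation.TransGen (fun a b =>
          (a ∈ V₁ ∩ V₂ ∧ b ∈ V₁ ∩ V₂ ∧ a ≠ b ∧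
            Relation.TransGen (fun x y => x ∈ V₁ ∧ y ∈ V₁ ∧ D x y) a b) ∨
          (a ∈ V₁ ∩ V₂ ∧ b ∈ V₁ ∩ V₂ ∧ a ≠ b ∧
            Relation.TransGen (fun x y => x ∈ V₂ ∧ y ∈ V₂ ∧ D x y) a b)) u u := by
  classical
  set D1 : V → V → Prop := fun x y => x ∈ V₁ ∧ y ∈ V₁ ∧ D x y with hD1
  set D2 : V → V → Prop := fun x y => x ∈ V₂ ∧ y ∈ V₂ ∧ D x y with hD2
  set Q : V → V → Prop := fun a b =>
      (a ∈ V₁ ∩ V₂ ∧ b ∈ V₁ ∩ V₂ ∧ a ≠ b ∧ Relation.TransGen D1 a b) ∨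
      (a ∈ V₁ ∩ V₂ ∧ b ∈ V₁ ∩ V₂ ∧ a ≠ b ∧ Relation.TransGen D2 a b) with hQ
  -- helper facts about endpoints of pure paths
  have hhead1 : ∀ {x y : V}, Relation.TransGen D1 x y → x ∈ V₁ := by
    intro x y h
    induction h with
    | single h => exact h.1
    | tail _ _ ih => exact ih
  have hhead2 : ∀ {x y : V}, Relation.TransGen D2 x y → x ∈ V₂ := by
    intro x y h
    induction h with
    | single h => exact h.1
    | tail _ _ ih => exact ih
  have hlast1 : ∀ {x y : V}, Relation.TransGen D1 x y → y ∈ V₁ := by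
    intro x y h
    induction h with
    | single h => exact h.2.1
    | tail _ h _ => exact h.2.1
  have hlast2 : ∀ {x y : V}, Relation.TransGen D2 x y → y ∈ V₂ := by
    intro x y h
    induction h with
    | single h => exact h.2.1
    | tail _ h _ => exact h.2.1
  constructor
  · -- forward: D acyclic ⇒ Q⁺ irreflexive
    intro hac u _ hQu
    have hmono : ∀ a b : V, Q a b → Relation.TransGen D a b := by
      intro a b hab
      rcases hab with ⟨_, _, _, h⟩ | ⟨_, _, _, h⟩
      · exact Relation.TransGen.mono (fun x y hxy => hxy.2.2 : ∀ x y, D1 x y → D x y) _ _ h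
      · exact Relation.TransGen.mono (fun x y hxy => hxy.2.2 : ∀ x y, D2 x y → D x y) _ _ h
    have h2 : Relation.TransGen (Relation.TransGen D) u u := Relation.TransGen.mono hmono _ _ hQu
    rw [Relation.transGen_idem] at h2
    exact hac u h2
  · -- backward: Q⁺ irreflexive ⇒ D acyclic
    intro hirr
    -- decomposition of any D-path
    have key : ∀ v w : V, Relation.TransGen D v w →
        Relation.TransGen D1 v w ∨ Relation.TransGen D2 v w ∨
        ∃ a b : V, a ∈ V₁ ∩ V₂ ∧ b ∈ V₁ ∩ V₂ ∧
          (Relation.TransGen D1 v a ∨ Relation.TransGen D2 v a) ∧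
          Relation.ReflTransGen Q a b ∧
          (Relation.TransGen D1 b w ∨ Relation.TransGen D2 b w) := by
      intro v w h
      induction h using Relation.TransGen.head_induction_on with
      | single h =>
        rcases harcs _ _ h with ⟨h1, h2⟩ | ⟨h1, h2⟩
        · exact Or.inl (Relation.TransGen.single ⟨h1, h2, h⟩)
        · exact Or.inr (Or.inl (Relation.TransGen.single ⟨h1, h2, h⟩))
      | head hxy hyw ih =>
        rename_i x y
        rcases harcs _ _ hxy with ⟨hx1, hy1⟩ | ⟨hx2, hy2⟩
        · -- the new first arc is a D1-arc
          have hstep : Relation.TransGen D1 x y :=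
            Relation.TransGen.single ⟨hx1, hy1, hxy⟩
          rcases ih with h1 | h2 | ⟨a, b, haX, hbX, hA, hab, hB⟩
          · exact Or.inl (hstep.trans h1)
          · have hyX : y ∈ V₁ ∩ V₂ := ⟨hy1, hhead2 h2⟩
            exact Or.inr (Or.inr ⟨y, y, hyX, hyX, Or.inl hstep,
              Relation.ReflTransGen.refl, Or.inr h2⟩)
          · rcases hA with hA1 | hA2
            · exact Or.inr (Or.inr ⟨a, b, haX, hbX, Or.inl (hstep.trans hA1), hab, hB⟩)
            · have hyX : y ∈ V₁ ∩ V₂ := ⟨hy1, hhead2 hA2⟩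
              by_cases hya : y = a
              · subst hya
                exact absurd hA2 (hac2 y)
              · have hq : Q y a := Or.inr ⟨hyX, haX, hya, hA2⟩
                exact Or.inr (Or.inr ⟨y, b, hyX, hbX, Or.inl hstep,
                  Relation.ReflTransGen.head hq hab, hB⟩)
        · -- the new first arc is a D2-arc
          have hstep : Relation.TransGen D2 x y :=
            Relation.TransGen.single ⟨hx2, hy2, hxy⟩
          rcases ih with h1 | h2 | ⟨a, b, haX, hbX, hA, hab, hB⟩
          · have hyX : y ∈ V₁ ∩ V₂ := ⟨hhead1 h1, hy2⟩
            exact Or.inr (Or.inr ⟨y, y, hyX, hyX, Or.inr hstep,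
              Relation.ReflTransGen.refl, Or.inl h1⟩)
          · exact Or.inr (Or.inl (hstep.trans h2))
          · rcases hA with hA1 | hA2
            · have hyX : y ∈ V₁ ∩ V₂ := ⟨hhead1 hA1, hy2⟩
              by_cases hya : y = a
              · subst hya
                exact absurd hA1 (hac1 y)
              · have hq : Q y a := Or.inl ⟨hyX, haX, hya, hA1⟩
                exact Or.inr (Or.inr ⟨y, b, hyX, hbX, Or.inr hstep,
                  Relation.ReflTransGen.head hq hab, hB⟩)
            · exact Or.inr (Or.inr ⟨a, b, haX, hbX, Or.inr (hstep.trans hA2), hab, hB⟩)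
    intro v hcyc
    rcases key v v hcyc with h1 | h2 | ⟨a, b, haX, hbX, hA, hab, hB⟩
    · exact hac1 v h1
    · exact hac2 v h2
    · rcases hB with hB1 | hB2 <;> rcases hA with hA1 | hA2
      · -- both D1 : combine to a D1-path b → a
        have hba : Relation.TransGen D1 b a := hB1.trans hA1
        by_cases hb : b = a
        · subst hb; exact hac1 b hba
        · have hq : Q b a := Or.inl ⟨hbX, haX, hb, hba⟩
          exact hirr a haX (Relation.TransGen.tail' hab hq)
      · -- b →(D1) v →(D2) a
        have hvX : v ∈ V₁ ∩ V₂ := ⟨hlast1 hB1, hhead2 hA2⟩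
        by_cases hbv : b = v
        · subst hbv; exact hac1 b hB1
        by_cases hva : v = a
        · subst hva; exact hac2 v hA2
        have hq1 : Q b v := Or.inl ⟨hbX, hvX, hbv, hB1⟩
        have hq2 : Q v a := Or.inr ⟨hvX, haX, hva, hA2⟩
        exact hirr a haX ((Relation.TransGen.tail' hab hq1).tail hq2)
      · -- b →(D2) v →(D1) a
        have hvX : v ∈ V₁ ∩ V₂ := ⟨hhead1 hA1, hlast2 hB2⟩
        by_cases hbv : b = v
        · subst hbv; exact hac2 b hB2
        by_cases hva : v = a
        · subst hva; exact hac1 v hA1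
        have hq1 : Q b v := Or.inr ⟨hbX, hvX, hbv, hB2⟩
        have hq2 : Q v a := Or.inl ⟨hvX, haX, hva, hA1⟩
        exact hirr a haX ((Relation.TransGen.tail' hab hq1).tail hq2)
      · -- both D2
        have hba : Relation.TransGen D2 b a := hB2.trans hA2
        by_cases hb : b = a
        · subst hb; exact hac2 b hba
        · have hq : Q b a := Or.inr ⟨hbX, haX, hb, hba⟩
          exact hirr a haX (Relation.TransGen.tail' hab hq)
end

section
/- Let Ĥ be a digraph, w a vertex all of whose neighbors lie in a set X ∋ w, and A the digraph on X with arcs: (u,v) for distinct u,v ∈ X\{w} whenever Ĥ − w has a directed path from u to v; (u,w) whenever (u,w) ∈ E(Ĥ); (w,v) whenever (w,v) ∈ E(Ĥ). Then for every pair of distinct vertices u,v ∈ X, Ĥ has a directed path from u to v if and only if A has a directed path from u to v. -/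
attribute [local instance] Classical.propDecidable

/-- The auxiliary digraph on `X` of the introduce-node construction:
arcs `(u,v)` for distinct `u, v ∈ X \ {w}` joined by a directed path in
`D - w`, together with the arcs of `D` incident to `w`. -/
def Aux {V : Type*} (D : V → V → Prop) (X : Set V) (w : V) : V → V → Prop :=
  fun u v =>
    (u ∈ X ∧ v ∈ X ∧ u ≠ w ∧ v ≠ w ∧ u ≠ v ∧
      Relation.TransGen (fun a b => a ≠ w ∧ b ≠ w ∧ D a b) u v) ∨
    (v = w ∧ u ∈ X ∧ u ≠ w ∧ D u w) ∨
    (u = w ∧ v ∈ X ∧ v ≠ w ∧ D w v)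

section Helpers

variable {V : Type*} (Hhat : V → V → Prop) (X : Set V) (w : V)

private def Dm (Hhat : V → V → Prop) (w : V) : V → V → Prop :=
  fun a b => a ≠ w ∧ b ≠ w ∧ Hhat a b

private lemma toW (hnbr : ∀ v : V, (Hhat v w → v ∈ X) ∧ (Hhat w v → v ∈ X)) :
    ∀ u : V, Relation.TransGen Hhat u w → u ≠ w →
      ∃ u', u' ∈ X ∧ u' ≠ w ∧ Hhat u' w ∧ (u = u' ∨ Relation.TransGen (Dm Hhat w) u u') := by
  intro u h
  induction h using Relation.TransGen.head_induction_on with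
  | single h => exact fun hu => ⟨_, (hnbr _).1 h, hu, h, Or.inl rfl⟩
  | head hab hbw ih =>
    intro hu
    rename_i a b
    by_cases hb : b = w
    · subst hb; exact ⟨a, (hnbr _).1 hab, hu, hab, Or.inl rfl⟩
    · obtain ⟨u', hX, hw', harc, hp⟩ := ih hb
      refine ⟨u', hX, hw', harc, Or.inr ?_⟩
      rcases hp with rfl | hp
      · exact Relation.TransGen.single ⟨hu, hb, hab⟩
      · exact Relation.TransGen.head ⟨hu, hb, hab⟩ hp

private lemma fromW (hnbr : ∀ v : V, (Hhat v w → v ∈ X) ∧ (Hhat w v → v ∈ X)) :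
    ∀ v : V, Relation.TransGen Hhat w v → v ≠ w →
      ∃ v', v' ∈ X ∧ v' ≠ w ∧ Hhat w v' ∧ (v' = v ∨ Relation.TransGen (Dm Hhat w) v' v) := by
  intro v h
  induction h with
  | single h => exact fun hv => ⟨_, (hnbr _).2 h, hv, h, Or.inl rfl⟩
  | tail hwb hbc ih =>
    intro hv
    rename_i b c
    by_cases hb : b = w
    · subst hb; exact ⟨c, (hnbr _).2 hbc, hv, hbc, Or.inl rfl⟩
    · obtain ⟨v', hX, hw', harc, hp⟩ := ih hb
      refine ⟨v', hX, hw', harc, Or.inr ?_⟩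
      rcases hp with rfl | hp
      · exact Relation.TransGen.single ⟨hb, hv, hbc⟩
      · exact Relation.TransGen.tail hp ⟨hb, hv, hbc⟩

private lemma splitW :
    ∀ u v : V, Relation.TransGen Hhat u v → u ≠ w → v ≠ w →
      Relation.TransGen (Dm Hhat w) u v ∨
        (Relation.TransGen Hhat u w ∧ Relation.TransGen Hhat w v) := by
  intro u v h
  induction h using Relation.TransGen.head_induction_on with
  | single h => exact fun hu hv => Or.inl (Relation.TransGen.single ⟨hu, hv, h⟩)
  | head hab hbv ih =>
    intro hu hv
    rename_i a b
    by_cases hb : b = w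
    · subst hb; exact Or.inr ⟨Relation.TransGen.single hab, hbv⟩
    · rcases ih hb hv with hp | ⟨h1, h2⟩
      · exact Or.inl (Relation.TransGen.head ⟨hu, hb, hab⟩ hp)
      · exact Or.inr ⟨Relation.TransGen.head hab h1, h2⟩

end Helpers

/-- if all neighbors of `w` in `Hhat` lie in `X ∋ w`, then for
all distinct `u, v ∈ X`, `Hhat` has a directed path from `u` to `v` iff the
auxiliary digraph does. -/
theorem stmt14 {V : Type*} (Hhat : V → V → Prop) (X : Set V) (w : V) (hwX : w ∈ X)
    (hnbr : ∀ v : V, (Hhat v w → v ∈ X) ∧ (Hhat w v → v ∈ X)) :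
    ∀ u v : V, u ∈ X → v ∈ X → u ≠ v →
      (Relation.TransGen Hhat u v ↔ Relation.TransGen (Aux Hhat X w) u v) := by
  intro u v huX hvX huv
  constructor
  · intro h
    by_cases hu : u = w
    · rw [hu] at h ⊢
      rw [hu] at huv huX
      obtain ⟨v', hX, hw', harc, hp⟩ := fromW Hhat X w hnbr v h (Ne.symm huv)
      have a1 : Aux Hhat X w w v' := Or.inr (Or.inr ⟨rfl, hX, hw', harc⟩)
      rcases hp with rfl | hp
      · exact Relation.TransGen.single a1
      · by_cases e : v' = v
        · subst e; exact Relation.TransGen.single a1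
        · exact Relation.TransGen.tail (Relation.TransGen.single a1)
            (Or.inl ⟨hX, hvX, hw', Ne.symm huv, e, hp⟩)
    · by_cases hv : v = w
      · rw [hv] at h ⊢
        rw [hv] at huv hvX
        obtain ⟨u', hX, hw', harc, hp⟩ := toW Hhat X w hnbr u h hu
        have a1 : Aux Hhat X w u' w := Or.inr (Or.inl ⟨rfl, hX, hw', harc⟩)
        rcases hp with rfl | hp
        · exact Relation.TransGen.single a1
        · by_cases e : u = u'
          · subst e; exact Relation.TransGen.single a1
          · exact Relation.TransGen.head (Or.inl ⟨huX, hX, hu, hw', e, hp⟩)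
              (Relation.TransGen.single a1)
      · rcases splitW Hhat w u v h hu hv with hp | ⟨h1, h2⟩
        · exact Relation.TransGen.single (Or.inl ⟨huX, hvX, hu, hv, huv, hp⟩)
        · obtain ⟨u', hXu, hwu', harcu, hpu⟩ := toW Hhat X w hnbr u h1 hu
          obtain ⟨v', hXv, hwv', harcv, hpv⟩ := fromW Hhat X w hnbr v h2 hv
          have a1 : Aux Hhat X w u' w := Or.inr (Or.inl ⟨rfl, hXu, hwu', harcu⟩)
          have a2 : Aux Hhat X w w v' := Or.inr (Or.inr ⟨rfl, hXv, hwv', harcv⟩)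
          have mid : Relation.TransGen (Aux Hhat X w) u' v' :=
            Relation.TransGen.tail (Relation.TransGen.single a1) a2
          have left : Relation.TransGen (Aux Hhat X w) u v' := by
            rcases hpu with rfl | hpu
            · exact mid
            · by_cases e : u = u'
              · subst e; exact mid
              · exact Relation.TransGen.head (Or.inl ⟨huX, hXu, hu, hwu', e, hpu⟩) mid
          rcases hpv with rfl | hpv
          · exact left
          · by_cases e : v' = v
            · subst e; exact left
            · exact Relation.TransGen.tail left (Or.inl ⟨hXv, hvX, hwv', hv, e, hpv⟩)
  · intro h
    have mono : ∀ a b, Aux Hhat X w a b → Relation.TransGen Hhat a b := by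
      rintro a b (⟨_, _, _, _, _, hp⟩ | ⟨rfl, _, _, harc⟩ | ⟨rfl, _, _, harc⟩)
      · exact Relation.TransGen.mono (fun x y h => h.2.2) _ _ hp
      · exact Relation.TransGen.single harc
      · exact Relation.TransGen.single harc
    have : Relation.TransGen (Relation.TransGen Hhat) u v := Relation.TransGen.mono mono _ _ h
    rwa [Relation.transGen_idem] at this
end

section
/- Let Q₁, Q₂ ⊆ X × X be reachability relations of acyclic digraphs D₁, D₂ on vertex sets V₁, V₂ with V₁ ∩ V₂ = X (Qᵢ = pairs (u,v), u ≠ v, joined by a directed path in Dᵢ), and suppose there are no arcs between V₁ \ X and V₂ \ X in D = D₁ ∪ D₂. If the transitive closure Q⁺ of Q₁ ∪ Q₂ is irreflexive, then D is acyclic and the restriction to X of the strict reachability relation of D equals Q⁺. -/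
attribute [local instance] Classical.propDecidable

namespace Stmt18Aux

variable {V : Type*}

/-- restriction of `D` to `W` -/
def Dr (D : V → V → Prop) (W : Set V) : V → V → Prop := fun x y => x ∈ W ∧ y ∈ W ∧ D x y

def Qr (D : V → V → Prop) (V₁ V₂ : Set V) : V → V → Prop := fun a b =>
  (a ∈ V₁ ∩ V₂ ∧ b ∈ V₁ ∩ V₂ ∧ a ≠ b ∧ Relation.TransGen (Dr D V₁) a b) ∨
  (a ∈ V₁ ∩ V₂ ∧ b ∈ V₁ ∩ V₂ ∧ a ≠ b ∧ Relation.TransGen (Dr D V₂) a b)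

def Ar (D : V → V → Prop) (V₁ V₂ : Set V) : V → V → Prop := fun a b =>
  a = b ∨ Relation.TransGen (Dr D V₁) a b ∨ Relation.TransGen (Dr D V₂) a b

def Pr (D : V → V → Prop) (V₁ V₂ : Set V) : V → V → Prop := fun u v =>
  Relation.TransGen (Dr D V₁) u v ∨ Relation.TransGen (Dr D V₂) u v ∨
  (∃ x y, x ∈ V₁ ∩ V₂ ∧ y ∈ V₁ ∩ V₂ ∧ Ar D V₁ V₂ u x ∧
      Relation.TransGen (Qr D V₁ V₂) x y ∧ Ar D V₁ V₂ y v) ∨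
  (∃ x, x ∈ V₁ ∩ V₂ ∧ Relation.TransGen (Dr D V₁) u x ∧ Relation.TransGen (Dr D V₂) x v) ∨
  (∃ x, x ∈ V₁ ∩ V₂ ∧ Relation.TransGen (Dr D V₂) u x ∧ Relation.TransGen (Dr D V₁) x v)

lemma mem_tg {D : V → V → Prop} {W : Set V} {a b : V}
    (h : Relation.TransGen (Dr D W) a b) : a ∈ W ∧ b ∈ W := by
  induction h with
  | single h => exact ⟨h.1, h.2.1⟩
  | tail _ h ih => exact ⟨ih.1, h.2.1⟩

variable {D : V → V → Prop} {V₁ V₂ : Set V}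

lemma step1 (hac2 : Acyclic (Dr D V₂)) {u v w : V}
    (hp : Pr D V₁ V₂ u v) (h : Dr D V₁ v w) : Pr D V₁ V₂ u w := by
  rcases hp with h1 | h2 | ⟨x, y, hx, hy, hA1, hQ, hA2⟩ | ⟨x, hx, ha, hb⟩ | ⟨x, hx, ha, hb⟩
  · exact Or.inl (h1.tail h)
  · exact Or.inr (Or.inr (Or.inr (Or.inr
      ⟨v, ⟨h.1, (mem_tg h2).2⟩, h2, Relation.TransGen.single h⟩)))
  · rcases hA2 with rfl | hd1 | hd2
    · exact Or.inr (Or.inr (Or.inl ⟨x, y, hx, hy, hA1, hQ,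
        Or.inr (Or.inl (Relation.TransGen.single h))⟩))
    · exact Or.inr (Or.inr (Or.inl ⟨x, y, hx, hy, hA1, hQ, Or.inr (Or.inl (hd1.tail h))⟩))
    · have hvX : v ∈ V₁ ∩ V₂ := ⟨h.1, (mem_tg hd2).2⟩
      by_cases hyv : y = v
      · exact absurd (hyv ▸ hd2) (hac2 v)
      · exact Or.inr (Or.inr (Or.inl ⟨x, v, hx, hvX, hA1,
          hQ.tail (Or.inr ⟨hy, hvX, hyv, hd2⟩),
          Or.inr (Or.inl (Relation.TransGen.single h))⟩))
  · have hvX : v ∈ V₁ ∩ V₂ := ⟨h.1, (mem_tg hb).2⟩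
    by_cases hxv : x = v
    · exact absurd (hxv ▸ hb) (hac2 v)
    · exact Or.inr (Or.inr (Or.inl ⟨x, v, hx, hvX, Or.inr (Or.inl ha),
        Relation.TransGen.single (Or.inr ⟨hx, hvX, hxv, hb⟩),
        Or.inr (Or.inl (Relation.TransGen.single h))⟩))
  · exact Or.inr (Or.inr (Or.inr (Or.inr ⟨x, hx, ha, hb.tail h⟩)))

lemma step2 (hac1 : Acyclic (Dr D V₁)) {u v w : V}
    (hp : Pr D V₁ V₂ u v) (h : Dr D V₂ v w) : Pr D V₁ V₂ u w := by
  rcases hp with h1 | h2 | ⟨x, y, hx, hy, hA1, hQ, hA2⟩ | ⟨x, hx, ha, hb⟩ | ⟨x, hx, ha, hb⟩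
  · exact Or.inr (Or.inr (Or.inr (Or.inl
      ⟨v, ⟨(mem_tg h1).2, h.1⟩, h1, Relation.TransGen.single h⟩)))
  · exact Or.inr (Or.inl (h2.tail h))
  · rcases hA2 with rfl | hd1 | hd2
    · exact Or.inr (Or.inr (Or.inl ⟨x, y, hx, hy, hA1, hQ,
        Or.inr (Or.inr (Relation.TransGen.single h))⟩))
    · have hvX : v ∈ V₁ ∩ V₂ := ⟨(mem_tg hd1).2, h.1⟩
      by_cases hyv : y = v
      · exact absurd (hyv ▸ hd1) (hac1 v)
      · exact Or.inr (Or.inr (Or.inl ⟨x, v, hx, hvX, hA1,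
          hQ.tail (Or.inl ⟨hy, hvX, hyv, hd1⟩),
          Or.inr (Or.inr (Relation.TransGen.single h))⟩))
    · exact Or.inr (Or.inr (Or.inl ⟨x, y, hx, hy, hA1, hQ, Or.inr (Or.inr (hd2.tail h))⟩))
  · exact Or.inr (Or.inr (Or.inr (Or.inl ⟨x, hx, ha, hb.tail h⟩)))
  · have hvX : v ∈ V₁ ∩ V₂ := ⟨(mem_tg hb).2, h.1⟩
    by_cases hxv : x = v
    · exact absurd (hxv ▸ hb) (hac1 v)
    · exact Or.inr (Or.inr (Or.inl ⟨x, v, hx, hvX, Or.inr (Or.inr ha),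
        Relation.TransGen.single (Or.inl ⟨hx, hvX, hxv, hb⟩),
        Or.inr (Or.inr (Relation.TransGen.single h))⟩))

lemma key (harcs : ∀ u v : V, D u v → (u ∈ V₁ ∧ v ∈ V₁) ∨ (u ∈ V₂ ∧ v ∈ V₂))
    (hac1 : Acyclic (Dr D V₁)) (hac2 : Acyclic (Dr D V₂)) {u v : V}
    (h : Relation.TransGen D u v) : Pr D V₁ V₂ u v := by
  induction h with
  | single h =>
    rcases harcs _ _ h with ⟨h1, h2⟩ | ⟨h1, h2⟩
    · exact Or.inl (Relation.TransGen.single ⟨h1, h2, h⟩)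
    · exact Or.inr (Or.inl (Relation.TransGen.single ⟨h1, h2, h⟩))
  | tail _ h ih =>
    rcases harcs _ _ h with ⟨h1, h2⟩ | ⟨h1, h2⟩
    · exact step1 hac2 ih ⟨h1, h2, h⟩
    · exact step2 hac1 ih ⟨h1, h2, h⟩

lemma A_to (hac1 : Acyclic (Dr D V₁)) (hac2 : Acyclic (Dr D V₂)) {a b : V}
    (ha : a ∈ V₁ ∩ V₂) (hb : b ∈ V₁ ∩ V₂) (h : Ar D V₁ V₂ a b) :
    a = b ∨ Qr D V₁ V₂ a b := by
  rcases h with rfl | h1 | h2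
  · exact Or.inl rfl
  · by_cases hab : a = b
    · exact absurd (hab ▸ h1) (hac1 b)
    · exact Or.inr (Or.inl ⟨ha, hb, hab, h1⟩)
  · by_cases hab : a = b
    · exact absurd (hab ▸ h2) (hac2 b)
    · exact Or.inr (Or.inr ⟨ha, hb, hab, h2⟩)

lemma compAA (hac1 : Acyclic (Dr D V₁)) (hac2 : Acyclic (Dr D V₂)) {a b c : V}
    (ha : a ∈ V₁ ∩ V₂) (hc : c ∈ V₁ ∩ V₂)
    (h1 : Ar D V₁ V₂ a b) (h2 : Ar D V₁ V₂ b c) :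
    a = c ∨ Relation.TransGen (Qr D V₁ V₂) a c := by
  rcases h1 with rfl | hd1 | hd2
  · exact (A_to hac1 hac2 ha hc h2).imp id Relation.TransGen.single
  · rcases h2 with rfl | he1 | he2
    · exact (A_to hac1 hac2 ha hc (Or.inr (Or.inl hd1))).imp id Relation.TransGen.single
    · exact (A_to hac1 hac2 ha hc (Or.inr (Or.inl (hd1.trans he1)))).imp id
        Relation.TransGen.single
    · have hbX : b ∈ V₁ ∩ V₂ := ⟨(mem_tg hd1).2, (mem_tg he2).1⟩
      rcases A_to hac1 hac2 ha hbX (Or.inr (Or.inl hd1)) with rfl | hq1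
      · exact (A_to hac1 hac2 ha hc (Or.inr (Or.inr he2))).imp id Relation.TransGen.single
      · rcases A_to hac1 hac2 hbX hc (Or.inr (Or.inr he2)) with rfl | hq2
        · exact Or.inr (Relation.TransGen.single hq1)
        · exact Or.inr ((Relation.TransGen.single hq1).tail hq2)
  · rcases h2 with rfl | he1 | he2
    · exact (A_to hac1 hac2 ha hc (Or.inr (Or.inr hd2))).imp id Relation.TransGen.single
    · have hbX : b ∈ V₁ ∩ V₂ := ⟨(mem_tg he1).1, (mem_tg hd2).2⟩
      rcases A_to hac1 hac2 ha hbX (Or.inr (Or.inr hd2)) with rfl | hq1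
      · exact (A_to hac1 hac2 ha hc (Or.inr (Or.inl he1))).imp id Relation.TransGen.single
      · rcases A_to hac1 hac2 hbX hc (Or.inr (Or.inl he1)) with rfl | hq2
        · exact Or.inr (Relation.TransGen.single hq1)
        · exact Or.inr ((Relation.TransGen.single hq1).tail hq2)
    · exact (A_to hac1 hac2 ha hc (Or.inr (Or.inr (hd2.trans he2)))).imp id
        Relation.TransGen.single

end Stmt18Aux

open Stmt18Aux in
/-- with the separator setup (`D = D₁ ∪ D₂`, every arc inside
`V₁` or `V₂`, both induced parts acyclic), if the transitive closure of
`Q₁ ∪ Q₂` is irreflexive on `X = V₁ ∩ V₂`, then `D` is acyclic and the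
restriction to `X` of the strict reachability relation of `D` equals that
transitive closure. -/
theorem stmt18 {V : Type*} (D : V → V → Prop) (V₁ V₂ : Set V)
    (harcs : ∀ u v : V, D u v → (u ∈ V₁ ∧ v ∈ V₁) ∨ (u ∈ V₂ ∧ v ∈ V₂))
    (hac1 : Acyclic (fun u v => u ∈ V₁ ∧ v ∈ V₁ ∧ D u v))
    (hac2 : Acyclic (fun u v => u ∈ V₂ ∧ v ∈ V₂ ∧ D u v))
    (hirr : ∀ u ∈ V₁ ∩ V₂, ¬ Relation.TransGen (fun a b =>
          (a ∈ V₁ ∩ V₂ ∧ b ∈ V₁ ∩ V₂ ∧ a ≠ b ∧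
            Relation.TransGen (fun x y => x ∈ V₁ ∧ y ∈ V₁ ∧ D x y) a b) ∨
          (a ∈ V₁ ∩ V₂ ∧ b ∈ V₁ ∩ V₂ ∧ a ≠ b ∧
            Relation.TransGen (fun x y => x ∈ V₂ ∧ y ∈ V₂ ∧ D x y) a b)) u u) :
    Acyclic D ∧
      ∀ u v : V, u ∈ V₁ ∩ V₂ → v ∈ V₁ ∩ V₂ →
        (Relation.TransGen D u v ↔ Relation.TransGen (fun a b =>
          (a ∈ V₁ ∩ V₂ ∧ b ∈ V₁ ∩ V₂ ∧ a ≠ b ∧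
            Relation.TransGen (fun x y => x ∈ V₁ ∧ y ∈ V₁ ∧ D x y) a b) ∨
          (a ∈ V₁ ∩ V₂ ∧ b ∈ V₁ ∩ V₂ ∧ a ≠ b ∧
            Relation.TransGen (fun x y => x ∈ V₂ ∧ y ∈ V₂ ∧ D x y) a b)) u v) := by
  have hac1' : Acyclic (Dr D V₁) := hac1
  have hac2' : Acyclic (Dr D V₂) := hac2
  have hirr' : ∀ u ∈ V₁ ∩ V₂, ¬ Relation.TransGen (Qr D V₁ V₂) u u := hirr
  constructor
  · intro v hv
    rcases key harcs hac1' hac2' hv with h1 | h2 | ⟨x, y, hx, hy, hA1, hQ, hA2⟩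
      | ⟨x, hx, ha, hb⟩ | ⟨x, hx, ha, hb⟩
    · exact hac1' v h1
    · exact hac2' v h2
    · rcases compAA hac1' hac2' hy hx hA2 hA1 with heq | hq
      · exact hirr' x hx (heq ▸ hQ)
      · exact hirr' x hx (hQ.trans hq)
    · have hvX : v ∈ V₁ ∩ V₂ := ⟨(mem_tg ha).1, (mem_tg hb).2⟩
      by_cases hvx : v = x
      · exact absurd (hvx ▸ ha) (hac1' x)
      · by_cases hxv : x = v
        · exact absurd (hxv ▸ hb) (hac2' v)
        · have q1 : Qr D V₁ V₂ v x := Or.inl ⟨hvX, hx, hvx, ha⟩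
          have q2 : Qr D V₁ V₂ x v := Or.inr ⟨hx, hvX, hxv, hb⟩
          exact hirr' v hvX ((Relation.TransGen.single q1).tail q2)
    · have hvX : v ∈ V₁ ∩ V₂ := ⟨(mem_tg hb).2, (mem_tg ha).1⟩
      by_cases hvx : v = x
      · exact absurd (hvx ▸ ha) (hac2' x)
      · by_cases hxv : x = v
        · exact absurd (hxv ▸ hb) (hac1' v)
        · have q1 : Qr D V₁ V₂ v x := Or.inr ⟨hvX, hx, hvx, ha⟩
          have q2 : Qr D V₁ V₂ x v := Or.inl ⟨hx, hvX, hxv, hb⟩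
          exact hirr' v hvX ((Relation.TransGen.single q1).tail q2)
  · intro u v hu hv
    constructor
    · intro h
      show Relation.TransGen (Qr D V₁ V₂) u v
      rcases key harcs hac1' hac2' h with h1 | h2 | ⟨x, y, hx, hy, hA1, hQ, hA2⟩
        | ⟨x, hx, ha, hb⟩ | ⟨x, hx, ha, hb⟩
      · by_cases huv : u = v
        · exact absurd (huv ▸ h1) (hac1' v)
        · exact Relation.TransGen.single (Or.inl ⟨hu, hv, huv, h1⟩)
      · by_cases huv : u = v
        · exact absurd (huv ▸ h2) (hac2' v)
        · exact Relation.TransGen.single (Or.inr ⟨hu, hv, huv, h2⟩)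
      · have t1 : Relation.TransGen (Qr D V₁ V₂) u y := by
          rcases A_to hac1' hac2' hu hx hA1 with rfl | hq
          · exact hQ
          · exact hQ.head hq
        rcases A_to hac1' hac2' hy hv hA2 with rfl | hq
        · exact t1
        · exact t1.tail hq
      · by_cases hux : u = x
        · exact absurd (hux ▸ ha) (hac1' x)
        · by_cases hxv : x = v
          · exact absurd (hxv ▸ hb) (hac2' v)
          · have q1 : Qr D V₁ V₂ u x := Or.inl ⟨hu, hx, hux, ha⟩
            have q2 : Qr D V₁ V₂ x v := Or.inr ⟨hx, hv, hxv, hb⟩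
            exact (Relation.TransGen.single q1).tail q2
      · by_cases hux : u = x
        · exact absurd (hux ▸ ha) (hac2' x)
        · by_cases hxv : x = v
          · exact absurd (hxv ▸ hb) (hac1' v)
          · have q1 : Qr D V₁ V₂ u x := Or.inr ⟨hu, hx, hux, ha⟩
            have q2 : Qr D V₁ V₂ x v := Or.inl ⟨hx, hv, hxv, hb⟩
            exact (Relation.TransGen.single q1).tail q2
    · intro h
      have lift : ∀ a b : V, Qr D V₁ V₂ a b → Relation.TransGen D a b := by
        rintro a b (⟨_, _, _, ht⟩ | ⟨_, _, _, ht⟩) <;>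
          exact Relation.TransGen.mono (fun x y hxy => hxy.2.2) _ _ ht
      have h' : Relation.TransGen (Qr D V₁ V₂) u v := h
      clear h hu hv
      induction h' with
      | single hq => exact lift _ _ hq
      | tail _ hq ih => exact ih.trans (lift _ _ hq)
end

section
/- Let D be a digraph, w a vertex with all neighbors in X ∋ w, and let A be the auxiliary digraph on X defined from the reachability relation P'' of D − w restricted to X \ {w} together with the arcs of D incident to w (as in the introduce-node construction). If D − w is acyclic and A contains a directed cycle, then A contains a directed cycle through w; conversely, if D contains a directed cycle, then A contains a directed triangle u → v → w → u for some u, v ∈ X \ {w} with (u,v) ∈ P''. -/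
attribute [local instance] Classical.propDecidable

private lemma split_lemma {V : Type*} (R : V → V → Prop) (w : V) {a b : V}
    (ha : a ≠ w) (h : Relation.TransGen R a b) :
    (Relation.TransGen (fun x y => x ≠ w ∧ y ≠ w ∧ R x y) a b ∧ b ≠ w) ∨
      (Relation.ReflTransGen R a w ∧ Relation.ReflTransGen R w b) := by
  induction h with
  | single hab =>
    rename_i c
    by_cases hc : c = w
    · subst hc
      exact Or.inr ⟨Relation.ReflTransGen.single hab, Relation.ReflTransGen.refl⟩
    · exact Or.inl ⟨Relation.TransGen.single ⟨ha, hc, hab⟩, hc⟩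
  | tail hab hbc ih =>
    rename_i b c
    rcases ih with ⟨h', hb⟩ | ⟨h1, h2⟩
    · by_cases hc : c = w
      · subst hc
        exact Or.inr ⟨hab.to_reflTransGen.tail hbc, Relation.ReflTransGen.refl⟩
      · exact Or.inl ⟨h'.tail ⟨hb, hc, hbc⟩, hc⟩
    · exact Or.inr ⟨h1, h2.tail hbc⟩

private lemma cycle_through {V : Type*} (R : V → V → Prop) (w : V)
    (h : Acyclic fun a b => a ≠ w ∧ b ≠ w ∧ R a b)
    (hv : ∃ v, Relation.TransGen R v v) : Relation.TransGen R w w := by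
  obtain ⟨v, hv⟩ := hv
  by_cases hvw : v = w
  · exact hvw ▸ hv
  · rcases split_lemma R w hvw hv with ⟨h', _⟩ | ⟨h1, h2⟩
    · exact absurd h' (h v)
    · have hvw' : Relation.TransGen R v w := by
        rcases Relation.reflTransGen_iff_eq_or_transGen.mp h1 with he | ht
        · exact absurd he.symm hvw
        · exact ht
      exact Relation.TransGen.trans_right h2 hvw'

private lemma avoid_lemma {V : Type*} (R : V → V → Prop) (w : V) {a : V}
    (h : Relation.ReflTransGen R a w) :
    a = w ∨ ∃ v, v ≠ w ∧
      Relation.ReflTransGen (fun x y => x ≠ w ∧ y ≠ w ∧ R x y) a v ∧ R v w := by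
  induction h using Relation.ReflTransGen.head_induction_on with
  | refl => exact Or.inl rfl
  | head hab hbw ih =>
    rename_i a b
    by_cases haw : a = w
    · exact Or.inl haw
    · right
      rcases ih with hb | ⟨v, hv, hpath, hvR⟩
      · exact ⟨a, haw, Relation.ReflTransGen.refl, hb ▸ hab⟩
      · by_cases hbw' : b = w
        · exact ⟨a, haw, Relation.ReflTransGen.refl, hbw' ▸ hab⟩
        · exact ⟨v, hv, Relation.ReflTransGen.head ⟨haw, hbw', hab⟩ hpath, hvR⟩

/-- for an oriented digraph `D` with all neighbors of `w` in
`X ∋ w` and `D - w` acyclic: if the auxiliary digraph `A` contains a directed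
cycle then it contains one through `w`; and if `D` contains a directed cycle
then `A` contains a directed triangle `u → v → w → u` with `(u,v) ∈ P''`. -/
theorem stmt19 {V : Type*} (D : V → V → Prop) (X : Set V) (w : V) (hwX : w ∈ X)
    (hnbr : ∀ v : V, (D v w → v ∈ X) ∧ (D w v → v ∈ X))
    (horient : ∀ u v : V, D u v → ¬ D v u)
    (hloop : ∀ v, ¬ D v v)
    (hHac : Acyclic (fun a b => a ≠ w ∧ b ≠ w ∧ D a b)) :
    ((∃ v, Relation.TransGen (Aux D X w) v v) →
        Relation.TransGen (Aux D X w) w w) ∧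
    ((∃ v, Relation.TransGen D v v) →
        ∃ u v : V, u ∈ X ∧ v ∈ X ∧ u ≠ w ∧ v ≠ w ∧
          Relation.TransGen (fun a b => a ≠ w ∧ b ≠ w ∧ D a b) u v ∧
          D v w ∧ D w u) := by
  constructor
  · intro hv
    apply cycle_through (Aux D X w) w _ hv
    intro v hvv
    apply hHac v
    have hmono : Relation.TransGen
        (Relation.TransGen (fun a b => a ≠ w ∧ b ≠ w ∧ D a b)) v v := by
      refine Relation.TransGen.mono ?_ _ _ hvv
      rintro x y ⟨hx, hy, hxy⟩
      rcases hxy with ⟨_, _, _, _, _, ht⟩ | ⟨rfl, _⟩ | ⟨rfl, _⟩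
      · exact ht
      · exact absurd rfl hy
      · exact absurd rfl hx
    rwa [Relation.transGen_idem] at hmono
  · intro hv
    have hww : Relation.TransGen D w w := cycle_through D w hHac hv
    obtain ⟨u, hwu, hru⟩ := Relation.TransGen.head'_iff.mp hww
    have huw : u ≠ w := fun h => hloop w (h ▸ hwu)
    rcases avoid_lemma D w hru with h | ⟨v, hvw, hpath, hvwD⟩
    · exact absurd h huw
    · have huv : u ≠ v := fun h => horient w u hwu (h ▸ hvwD)
      have ht : Relation.TransGen (fun a b => a ≠ w ∧ b ≠ w ∧ D a b) u v := by
        rcases Relation.reflTransGen_iff_eq_or_transGen.mp hpath with he | ht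
        · exact absurd he.symm huv
        · exact ht
      exact ⟨u, v, (hnbr u).2 hwu, (hnbr v).1 hvwD, huw, hvw, ht, hvwD, hwu⟩
end
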